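/- arXiv:1506.06484 — 4 statements merged into one kernel-verified Lean document; each statement's English description precedes it below -/
import Mathlib

section
/- Let g(ψ) = c·(C - ψ·c_S)·e^{-(C - ψ·c_S)/(π₀·ψ·c_TX)} for constants c > 0, C > 0, c_S > 0, c_TX > 0, π₀ ∈ (0,1]. Then g is increasing on (0, ψ*) and decreasing on (ψ*, C/c_S), where ψ* = (2C/c_S)/(1 + √(1 + 4π₀·c_TX/c_S)); consequently the unconstrained maximizer of g over (0, C/c_S) is ψ*. -/
/-!
The derivative of `g` at `ψ > 0` is a positive factor times the quadratic
`C² - C c_S ψ - c_S π₀ c_TX ψ²`, whose positive root is `ψ*`. Factoring out `ψ* - ψ` shows that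
`g'` is positive before `ψ*` and negative after it, which gives the monotonicity and hence the
maximum at `ψ*`.
-/

open Real Set

theorem strictMonoOn_Ioc_and_strictAntiOn_Ici_of_hasDerivAt {f D : ℝ → ℝ} {a r : ℝ}
    (har : a < r) (hf : ∀ x ∈ Ioi a, HasDerivAt f (D x * (r - x)) x)
    (hD : ∀ x ∈ Ioi a, 0 < D x) :
    StrictMonoOn f (Ioc a r) ∧ StrictAntiOn f (Ici r) := by
  have hcont : ContinuousOn f (Ioi a) := fun x hx => (hf x hx).continuousAt.continuousWithinAt
  have hIci : Ici r ⊆ Ioi a := Ici_subset_Ioi.2 har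
  constructor
  · refine strictMonoOn_of_hasDerivWithinAt_pos (convex_Ioc a r)
      (hcont.mono Ioc_subset_Ioi_self) (fun x hx => (hf x ?_).hasDerivWithinAt) fun x hx => ?_
    all_goals rw [interior_Ioc] at hx
    · exact hx.1
    · exact mul_pos (hD x hx.1) (sub_pos.2 hx.2)
  · refine strictAntiOn_of_hasDerivWithinAt_neg (convex_Ici r)
      (hcont.mono hIci) (fun x hx => (hf x ?_).hasDerivWithinAt) fun x hx => ?_
    all_goals rw [interior_Ici] at hx
    · exact har.trans hx
    · exact mul_neg_of_pos_of_neg (hD x (har.trans hx)) (sub_neg.2 hx)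

section SensingTraffic

variable (c C cS cTX π₀ : ℝ)

noncomputable def throughput (ψ : ℝ) : ℝ :=
  c * (C - ψ * cS) * exp (-(C - ψ * cS) / (π₀ * ψ * cTX))

noncomputable def optimalTraffic : ℝ :=
  (2 * C / cS) / (1 + √(1 + 4 * π₀ * cTX / cS))

theorem hasDerivAt_throughput {ψ : ℝ} (hψ : ψ ≠ 0) (hπ₀ : π₀ ≠ 0) (hcTX : cTX ≠ 0) :
    HasDerivAt (throughput c C cS cTX π₀)
      (c * exp (-(C - ψ * cS) / (π₀ * ψ * cTX)) *
        ((C ^ 2 - C * cS * ψ - cS * π₀ * cTX * ψ ^ 2) / (π₀ * cTX * ψ ^ 2))) ψ := by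
  have hlin : HasDerivAt (fun x => C - x * cS) (-cS) ψ := by
    simpa using ((hasDerivAt_id ψ).mul_const cS).const_sub C
  have hden : HasDerivAt (fun x => π₀ * x * cTX) (π₀ * cTX) ψ := by
    simpa using ((hasDerivAt_id ψ).const_mul π₀).mul_const cTX
  have hratio : HasDerivAt (fun x => -(C - x * cS) / (π₀ * x * cTX))
      ((-(-cS) * (π₀ * ψ * cTX) - -(C - ψ * cS) * (π₀ * cTX)) / (π₀ * ψ * cTX) ^ 2) ψ :=
    hlin.neg.div hden (by positivity)
  have hexp := hratio.exp
  refine ((hlin.const_mul c).mul hexp).congr_deriv ?_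
  field_simp
  ring

variable {C cS cTX π₀}

theorem optimalTraffic_pos (hC : 0 < C) (hcS : 0 < cS) : 0 < optimalTraffic C cS cTX π₀ := by
  unfold optimalTraffic
  positivity

theorem quadratic_eq_mul_optimalTraffic_sub (hcS : 0 < cS) (hk : 0 ≤ π₀ * cTX) (ψ : ℝ) :
    C ^ 2 - C * cS * ψ - cS * π₀ * cTX * ψ ^ 2 =
      cS * (C + π₀ * cTX * (ψ + optimalTraffic C cS cTX π₀)) *
        (optimalTraffic C cS cTX π₀ - ψ) := by
  have hsq := sq_sqrt (show 0 ≤ 1 + 4 * π₀ * cTX / cS by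
    have : 0 ≤ 4 * π₀ * cTX / cS := by rw [mul_assoc]; positivity
    linarith)
  unfold optimalTraffic
  have hs_nonneg := sqrt_nonneg (1 + 4 * π₀ * cTX / cS)
  generalize √(1 + 4 * π₀ * cTX / cS) = s at hsq hs_nonneg ⊢
  have hs_sq : cS * s ^ 2 = cS + 4 * π₀ * cTX := by
    rw [hsq]
    field_simp
  have hroot : cS * ((2 * C / cS) / (1 + s)) * (1 + s) = 2 * C := by
    field_simp
  linear_combination (-(C / 2 + cS * ((2 * C / cS) / (1 + s)) * (s - 1) / 4)) * hroot +
    (cS * ((2 * C / cS) / (1 + s)) ^ 2 / 4) * hs_sq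

end SensingTraffic

theorem sensing_traffic_optimum_general (c C cS cTX π₀ : ℝ)
    (hc : 0 < c) (hC : 0 < C) (hcS : 0 < cS) (hcTX : 0 < cTX)
    (hπ0 : 0 < π₀) :
    let g : ℝ → ℝ := fun ψ => c * (C - ψ * cS) * Real.exp (-(C - ψ * cS) / (π₀ * ψ * cTX))
    let ψs : ℝ := (2 * C / cS) / (1 + Real.sqrt (1 + 4 * π₀ * cTX / cS))
    StrictMonoOn g (Set.Ioc 0 ψs) ∧ StrictAntiOn g (Set.Ico ψs (C / cS)) ∧
      ∀ ψ ∈ Set.Ioo (0 : ℝ) (C / cS), g ψ ≤ g ψs := by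
  intro g ψs
  obtain ⟨hmono, hanti⟩ := strictMonoOn_Ioc_and_strictAntiOn_Ici_of_hasDerivAt
    (f := throughput c C cS cTX π₀)
    (D := fun ψ => c * exp (-(C - ψ * cS) / (π₀ * ψ * cTX)) *
      (cS * (C + π₀ * cTX * (ψ + optimalTraffic C cS cTX π₀)) / (π₀ * cTX * ψ ^ 2)))
    (optimalTraffic_pos hC hcS)
    (fun ψ hψ => by
      convert hasDerivAt_throughput c C cS cTX π₀ (ne_of_gt hψ) hπ0.ne' hcTX.ne' using 1
      rw [quadratic_eq_mul_optimalTraffic_sub hcS (mul_pos hπ0 hcTX).le]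
      ring)
    (fun ψ (hψ : 0 < ψ) => by
      have := optimalTraffic_pos (cTX := cTX) (π₀ := π₀) hC hcS
      positivity)
  have hanti' : StrictAntiOn g (Ico ψs (C / cS)) := hanti.mono Ico_subset_Ici_self
  exact ⟨hmono, hanti', isMaxOn_Ioo_of_mono_anti hmono.monotoneOn hanti'.antitoneOn⟩

/-- Let `g(ψ) = c (C - ψ c_S) e^{-(C - ψ c_S)/(π₀ ψ c_TX)}` for constants `c > 0`, `C > 0`,
`c_S > 0`, `c_TX > 0`, `π₀ ∈ (0,1]`.  Then `g` is increasing on `(0, ψ*)` and decreasing on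
`(ψ*, C/c_S)`, where `ψ* = (2C/c_S)/(1 + √(1 + 4π₀ c_TX/c_S))`; consequently the
unconstrained maximizer of `g` over `(0, C/c_S)` is `ψ*`. -/
theorem sensing_traffic_optimum (c C cS cTX π₀ : ℝ)
    (hc : 0 < c) (hC : 0 < C) (hcS : 0 < cS) (hcTX : 0 < cTX)
    (hπ0 : 0 < π₀) (hπ1 : π₀ ≤ 1) :
    let g : ℝ → ℝ := fun ψ => c * (C - ψ * cS) * Real.exp (-(C - ψ * cS) / (π₀ * ψ * cTX))
    let ψs : ℝ := (2 * C / cS) / (1 + Real.sqrt (1 + 4 * π₀ * cTX / cS))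
    StrictMonoOn g (Set.Ioc 0 ψs) ∧ StrictAntiOn g (Set.Ico ψs (C / cS)) ∧
      ∀ ψ ∈ Set.Ioo (0 : ℝ) (C / cS), g ψ ≤ g ψs :=
  sensing_traffic_optimum_general c C cS cTX π₀ hc hC hcS hcTX hπ0
end

section
/- In the belief Markov chain with states (b,τ), b ∈ {0,1}, τ ≥ 1, where from state (b,τ) with probability p_S(b) a measurement resets the belief (transitioning to the state detected after a τ-step channel evolution with delay reset to 1), and with probability 1-p_S(b) the state moves to (b,τ+1): the stationary distribution satisfies π(b,τ) = (f(b)/(f(0)/p_S(0) + f(1)/p_S(1))) · (1-p_S(b))^{τ-1}, where f(b) = Σ_{τ=1}^∞ (1-p_S(1-b))^{τ-1} p_S(1-b) P^{(τ)}(b|1-b) and P^{(τ)} denotes the τ-step channel transition probability. -/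
/-!
Between two measurements the belief only ages, so `π(b, τ) = π(b, 1) (1 - p_S(b))^{τ-1}`.
Summing out the delay, the detected states form a two-state chain whose kernel `K b c` is the
probability that the first successful measurement after a reset to `(b, 1)` detects `c`; its rows
sum to one because the measurement delay is geometric. A two-state stochastic matrix has the
stationary vector `(K 1 0, K 0 1) = (f 0, f 1)`, which gives the balance equation at `τ = 1` for
any normalisation `Z`.
-/

lemma summable_geometric_mul_of_nonneg_of_le_one {r : ℝ} (hr₀ : 0 ≤ r) (hr₁ : r < 1)
    {q : ℕ → ℝ} (hq₀ : ∀ t, 0 ≤ q t) (hq₁ : ∀ t, q t ≤ 1) :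
    Summable fun t => r ^ t * q t :=
  (summable_geometric_of_lt_one hr₀ hr₁).of_nonneg_of_le
    (fun t => mul_nonneg (pow_nonneg hr₀ t) (hq₀ t))
    (fun t => mul_le_of_le_one_right (pow_nonneg hr₀ t) (hq₁ t))

lemma tsum_one_sub_pow_mul_self {p : ℝ} (hp₀ : 0 < p) (hp₁ : p ≤ 1) :
    ∑' t : ℕ, (1 - p) ^ t * p = 1 := by
  rw [tsum_mul_right, tsum_geometric_of_lt_one (by linarith) (by linarith), sub_sub_cancel,
    inv_mul_cancel₀ hp₀.ne']

lemma two_state_stationary (K : Bool → Bool → ℝ) (hK : ∀ b, K b false + K b true = 1)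
    (b : Bool) : K true false * K false b + K false true * K true b = K (!b) b := by
  cases b <;> simp only [Bool.not_false, Bool.not_true]
  · linear_combination K true false * hK false
  · linear_combination K false true * hK true

lemma Bool.le_one_of_nonneg_of_add_eq_one {q : Bool → ℝ} (h₀ : ∀ c, 0 ≤ q c)
    (h₁ : q false + q true = 1) (c : Bool) : q c ≤ 1 := by
  cases c <;> linarith [h₀ false, h₀ true]

/-- `detectionKernel pS P b c` is the probability that the first successful measurement after a
reset to `(b, 1)` detects `c`: it succeeds after `t + 1` slots with probability
`(1 - p_S(b))^t p_S(b)`. -/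
noncomputable def detectionKernel (pS : Bool → ℝ) (P : ℕ → Bool → Bool → ℝ)
    (b c : Bool) : ℝ :=
  ∑' t : ℕ, (1 - pS b) ^ t * pS b * P (t + 1) b c

section DetectionKernel

variable {pS : Bool → ℝ} {P : ℕ → Bool → Bool → ℝ}

lemma summable_detectionKernel_term {b : Bool} (hp : pS b ∈ Set.Ioc (0 : ℝ) 1)
    (hP0 : ∀ τ b b', 0 ≤ P τ b b') (hP1 : ∀ τ b, P τ b false + P τ b true = 1)
    (c : Bool) :
    Summable fun t : ℕ => (1 - pS b) ^ t * pS b * P (t + 1) b c := by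
  obtain ⟨hp₀, hp₁⟩ := hp
  simpa only [mul_assoc] using summable_geometric_mul_of_nonneg_of_le_one (by linarith)
    (by linarith) (fun t => mul_nonneg hp₀.le (hP0 (t + 1) b c))
    (fun t => mul_le_one₀ hp₁ (hP0 (t + 1) b c)
      (Bool.le_one_of_nonneg_of_add_eq_one (hP0 (t + 1) b) (hP1 (t + 1) b) c))

lemma detectionKernel_false_add_true {b : Bool} (hp : pS b ∈ Set.Ioc (0 : ℝ) 1)
    (hP0 : ∀ τ b b', 0 ≤ P τ b b') (hP1 : ∀ τ b, P τ b false + P τ b true = 1) :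
    detectionKernel pS P b false + detectionKernel pS P b true = 1 := by
  have hsum := summable_detectionKernel_term hp hP0 hP1
  rw [detectionKernel, detectionKernel, ← (hsum false).tsum_add (hsum true)]
  calc ∑' t : ℕ, ((1 - pS b) ^ t * pS b * P (t + 1) b false +
        (1 - pS b) ^ t * pS b * P (t + 1) b true)
      = ∑' t : ℕ, (1 - pS b) ^ t * pS b :=
        tsum_congr fun t => by linear_combination (1 - pS b) ^ t * pS b * hP1 (t + 1) b
    _ = 1 := tsum_one_sub_pow_mul_self hp.1 hp.2

end DetectionKernel

/-- Stationary distribution of the belief Markov chain with states `(b,τ)`, `b ∈ {0,1}`,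
`τ ≥ 1` (here `τ` is encoded as `t+1` for `t : ℕ`).  From `(b,τ)`, with probability
`p_S(b)` a measurement resets the belief (transitioning to the state detected after a
`τ`-step channel evolution, with delay reset to `1`), and with probability `1 - p_S(b)`
the state moves to `(b,τ+1)`.  The stationary distribution is
`pist(b,τ) = (f(b)/(f(0)/p_S(0) + f(1)/p_S(1))) (1-p_S(b))^{τ-1}`, where
`f(b) = Σ_{τ≥1} (1-p_S(1-b))^{τ-1} p_S(1-b) P^{(τ)}(b|1-b)`. -/
theorem belief_chain_stationary (pS : Bool → ℝ) (P : ℕ → Bool → Bool → ℝ)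
    (hpS : ∀ b, pS b ∈ Set.Ioo (0 : ℝ) 1)
    (hP0 : ∀ τ b b', 0 ≤ P τ b b') (hP1 : ∀ τ b, P τ b false + P τ b true = 1) :
    let f : Bool → ℝ := fun b => ∑' t : ℕ, (1 - pS (Bool.not b)) ^ t * pS (Bool.not b) * P (t + 1) (Bool.not b) b
    let Z : ℝ := f false / pS false + f true / pS true
    let pist : Bool → ℕ → ℝ := fun b t => (f b / Z) * (1 - pS b) ^ t
    -- pist(b, τ+1) = pist(b, τ)(1 - p_S(b))
    (∀ b t, pist b (t + 1) = pist b t * (1 - pS b)) ∧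
    -- pist(b, 1) = Σ_{b'} Σ_{τ≥1} pist(b', τ) p_S(b') P^{(τ)}(b|b')
    (∀ b, pist b 0 =
      ∑' t : ℕ, (pist false t * pS false * P (t + 1) false b +
                 pist true t * pS true * P (t + 1) true b)) := by
  intro f Z pist
  set K := detectionKernel pS P
  have hf : ∀ b, f b = K (!b) b := fun _ => rfl
  refine ⟨fun b t => by simp only [pist, pow_succ, mul_assoc], fun b => ?_⟩
  have hp : ∀ b, pS b ∈ Set.Ioc (0 : ℝ) 1 := fun b => Set.Ioo_subset_Ioc_self (hpS b)
  have hsum b := summable_detectionKernel_term (hp b) hP0 hP1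
  calc pist b 0 = (K true false * K false b + K false true * K true b) / Z := by
        simp only [pist, pow_zero, mul_one, hf,
          two_state_stationary K fun b => detectionKernel_false_add_true (hp b) hP0 hP1]
    _ = f false / Z * K false b + f true / Z * K true b := by
        rw [hf, hf, Bool.not_false, Bool.not_true]
        ring
    _ = ∑' t : ℕ, (f false / Z * ((1 - pS false) ^ t * pS false * P (t + 1) false b) +
          f true / Z * ((1 - pS true) ^ t * pS true * P (t + 1) true b)) := by
        rw [((hsum false b).mul_left _).tsum_add ((hsum true b).mul_left _), tsum_mul_left,
          tsum_mul_left]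
        rfl
    _ = _ := tsum_congr fun t => by simp only [pist]; ring
end

section
/- For each i with β_i < ξ(1-ρ_S)/((1-ξ)(1-ρ_P)+ξ(1-ρ_S)), the function r_i ↦ [(1-β_i)r_i + c·β_i]e^{-r_i} with c = ((1-ξ)(1-ρ_P))/(ξ(1-ρ_S)) is strictly concave on [0, r_max,i], where r_max,i = 1 - (β_i/(1-β_i))·c; in particular its second derivative g(r_i) = [(1-β_i)(r_i - 2) + c·β_i]e^{-r_i} satisfies g(r_i) ≤ -(1-β_i)e^{-r_max,i} < 0 for all r_i ∈ [0, r_max,i]. -/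
/-!
Writing the objective as `(a r + b) e^{-r}` with `a = 1 - β_i`, `b = c β_i`, its second
derivative is `(a (r - 2) + b) e^{-r}`, negative exactly for `r < 2 - b / a`. The choice of
`r_max,i` makes `b = a (1 - r_max,i)`, so the second derivative equals
`a (r - 1 - r_max,i) e^{-r} ≤ -a e^{-r} ≤ -a e^{-r_max,i}` for `r ≤ r_max,i`.
-/

open Real Set

section AffineMulExpNeg

variable (a b : ℝ)

theorem hasDerivAt_affine_mul_exp_neg (r : ℝ) :
    HasDerivAt (fun r => (a * r + b) * exp (-r)) ((-a * r + (a - b)) * exp (-r)) r := by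
  have h_affine : HasDerivAt (fun r => a * r + b) a r := by
    simpa using ((hasDerivAt_id r).const_mul a).add_const b
  have h_exp : HasDerivAt (fun r => exp (-r)) (-exp (-r)) r := by
    simpa using (hasDerivAt_neg r).exp
  exact (h_affine.mul h_exp).congr_deriv (by ring)

theorem deriv_affine_mul_exp_neg :
    deriv (fun r => (a * r + b) * exp (-r)) = fun r => (-a * r + (a - b)) * exp (-r) :=
  funext fun r => (hasDerivAt_affine_mul_exp_neg a b r).deriv

theorem deriv_deriv_affine_mul_exp_neg :
    deriv (deriv fun r => (a * r + b) * exp (-r)) = fun r => (a * r + (b - 2 * a)) * exp (-r) := by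
  rw [deriv_affine_mul_exp_neg, deriv_affine_mul_exp_neg]
  ext r
  ring_nf

variable {a}

theorem strictConcaveOn_Iic_affine_mul_exp_neg (ha : 0 < a) :
    StrictConcaveOn ℝ (Iic (2 - b / a)) fun r => (a * r + b) * exp (-r) := by
  refine strictConcaveOn_of_deriv2_neg (convex_Iic _) (by fun_prop) fun x hx => ?_
  rw [interior_Iic] at hx
  have h_factor : a * x + (b - 2 * a) = a * (x - (2 - b / a)) := by
    field_simp
    ring
  rw [Function.iterate_succ_apply, Function.iterate_one, deriv_deriv_affine_mul_exp_neg]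
  dsimp only
  rw [h_factor]
  exact mul_neg_of_neg_of_pos (mul_neg_of_pos_of_neg ha (sub_neg.2 hx)) (exp_pos _)

theorem mul_sub_mul_exp_neg_le {r m : ℝ} (ha : 0 ≤ a) (hr : r ≤ m) :
    a * (r - 1 - m) * exp (-r) ≤ -a * exp (-m) :=
  calc a * (r - 1 - m) * exp (-r) ≤ -a * exp (-r) := by
        gcongr
        nlinarith
    _ ≤ -a * exp (-m) :=
        mul_le_mul_of_nonpos_left (exp_le_exp.2 (neg_le_neg hr)) (neg_nonpos.2 ha)

end AffineMulExpNeg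

theorem per_band_objective_strictly_concave_general (βi ξ ρS ρP : ℝ)
    (hβ : βi ∈ Set.Ico (0 : ℝ) 1) :
    let c : ℝ := ((1 - ξ) * (1 - ρP)) / (ξ * (1 - ρS))
    let rmax : ℝ := 1 - (βi / (1 - βi)) * c
    let f : ℝ → ℝ := fun r => ((1 - βi) * r + c * βi) * Real.exp (-r)
    let g : ℝ → ℝ := fun r => ((1 - βi) * (r - 2) + c * βi) * Real.exp (-r)
    (∀ r : ℝ, deriv (deriv f) r = g r) ∧
    StrictConcaveOn ℝ (Set.Icc 0 rmax) f ∧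
    (∀ r ∈ Set.Icc (0 : ℝ) rmax,
      g r ≤ -(1 - βi) * Real.exp (-rmax) ∧ g r < 0) := by
  intro c rmax f g
  have h1β : 0 < 1 - βi := sub_pos.2 hβ.2
  have hg : ∀ r, g r = (1 - βi) * (r - 1 - rmax) * exp (-r) := fun r => by
    simp only [g, rmax]
    field_simp
    ring
  have h_subset : Icc 0 rmax ⊆ Iic (2 - c * βi / (1 - βi)) := fun r hr => by
    have : βi / (1 - βi) * c = c * βi / (1 - βi) := by ring
    simp only [mem_Iic, rmax] at hr ⊢
    linarith [hr.2]
  refine ⟨fun r => by simp only [f, g, deriv_deriv_affine_mul_exp_neg]; ring,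
    (strictConcaveOn_Iic_affine_mul_exp_neg _ h1β).subset h_subset (convex_Icc 0 rmax),
    fun r hr => ?_⟩
  have h_le := hg r ▸ mul_sub_mul_exp_neg_le h1β.le hr.2
  exact ⟨h_le, h_le.trans_lt (mul_neg_of_neg_of_pos (neg_neg_of_pos h1β) (exp_pos _))⟩

/-- For a band with `β_i` below the threshold, the per-band objective
`r ↦ [(1-β_i) r + c β_i] e^{-r}` with `c = ((1-ξ)(1-ρ_P))/(ξ(1-ρ_S))` is strictly concave
on `[0, r_max,i]`, where `r_max,i = 1 - (β_i/(1-β_i)) c`; its second derivative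
`g(r) = [(1-β_i)(r-2) + c β_i] e^{-r}` satisfies
`g(r) ≤ -(1-β_i) e^{-r_max,i} < 0` on `[0, r_max,i]`. -/
theorem per_band_objective_strictly_concave (βi ξ ρS ρP : ℝ)
    (hβ : βi ∈ Set.Ico (0 : ℝ) 1) (hξ : ξ ∈ Set.Ioo (0 : ℝ) 1)
    (hρS : ρS ∈ Set.Ico (0 : ℝ) 1) (hρP : ρP ∈ Set.Ico (0 : ℝ) 1)
    (hthr : βi < ξ * (1 - ρS) / ((1 - ξ) * (1 - ρP) + ξ * (1 - ρS))) :
    let c : ℝ := ((1 - ξ) * (1 - ρP)) / (ξ * (1 - ρS))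
    let rmax : ℝ := 1 - (βi / (1 - βi)) * c
    let f : ℝ → ℝ := fun r => ((1 - βi) * r + c * βi) * Real.exp (-r)
    let g : ℝ → ℝ := fun r => ((1 - βi) * (r - 2) + c * βi) * Real.exp (-r)
    (∀ r : ℝ, deriv (deriv f) r = g r) ∧
    StrictConcaveOn ℝ (Set.Icc 0 rmax) f ∧
    (∀ r ∈ Set.Icc (0 : ℝ) rmax,
      g r ≤ -(1 - βi) * Real.exp (-rmax) ∧ g r < 0) :=
  per_band_objective_strictly_concave_general βi ξ ρS ρP hβ
end

section
/- Consider maximizing F(r) = Σ_{i=1}^F [(1-β_i)r_i + c·β_i]e^{-r_i} over {r : 0 ≤ r_i ≤ r_max,i, Σ_i r_i = Λ}, with c > 0, β_i ∈ [0,1), Λ ∈ [0, Σ_i r_max,i]. If β_i > β_j for some i ≠ j, then any maximizer r* satisfies r*_i ≤ r*_j. -/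
/-!
Swapping the loads of bands `i` and `j` keeps the allocation feasible (the cap
`max 0 (1 - c β/(1-β))` decreases in `β`) and changes the objective by
`(β_i - β_j) (h(r_i) - h(r_j))` with `h x = (x - c) e^{-x}`. Since `h' x = (1 + c - x) e^{-x}`
and every load is at most `1 ≤ 1 + c`, this gain is positive whenever `r_i > r_j`,
contradicting optimality.
-/

open Real

lemma strictMonoOn_sub_mul_exp_neg (c : ℝ) :
    StrictMonoOn (fun x => (x - c) * exp (-x)) (Set.Iic (1 + c)) := by
  apply strictMonoOn_of_deriv_pos (convex_Iic _) (by fun_prop)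
  intro x hx
  rw [interior_Iic, Set.mem_Iio] at hx
  have hderiv : HasDerivAt (fun x => (x - c) * exp (-x)) ((1 + c - x) * exp (-x)) x :=
    (((hasDerivAt_id x).sub_const c).fun_mul (hasDerivAt_neg x).exp).congr_deriv
      (by simp only [id]; ring)
  rw [hderiv.deriv]
  exact mul_pos (by linarith) (exp_pos _)

lemma Fintype.sum_comp_swap_sub_sum {ι α M : Type*} [Fintype ι] [DecidableEq ι]
    [AddCommGroup M] (f : ι → α → M) (r : ι → α) {i j : ι} (hij : i ≠ j) :
    ∑ k, f k (r (Equiv.swap i j k)) - ∑ k, f k (r k)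
      = (f i (r j) - f i (r i)) + (f j (r i) - f j (r j)) := by
  rw [← Finset.sum_sub_distrib, Fintype.sum_eq_add i j hij]
  · simp only [Equiv.swap_apply_left, Equiv.swap_apply_right]
  · rintro k ⟨hki, hkj⟩
    rw [Equiv.swap_apply_of_ne_of_ne hki hkj, sub_self]

lemma swap_mem_box {ι α : Type*} [DecidableEq ι] [Preorder α] {l : α} {r u : ι → α} {i j : ι}
    (hbox : ∀ k, l ≤ r k ∧ r k ≤ u k) (hu : u i ≤ u j) (hr : r j ≤ r i) :
    ∀ k, l ≤ r (Equiv.swap i j k) ∧ r (Equiv.swap i j k) ≤ u k := by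
  intro k
  rcases eq_or_ne k i with rfl | hki
  · rw [Equiv.swap_apply_left]
    exact ⟨(hbox j).1, hr.trans (hbox k).2⟩
  rcases eq_or_ne k j with rfl | hkj
  · rw [Equiv.swap_apply_right]
    exact ⟨(hbox i).1, (hbox i).2.trans hu⟩
  rw [Equiv.swap_apply_of_ne_of_ne hki hkj]
  exact hbox k

noncomputable def bandValue (c β x : ℝ) : ℝ := ((1 - β) * x + c * β) * exp (-x)

lemma bandValue_sub_bandValue (c β β' x : ℝ) :
    bandValue c β x - bandValue c β' x = (β - β') * (c - x) * exp (-x) := by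
  unfold bandValue
  ring

lemma bandValue_swap_gain_pos {c β β' a b : ℝ} (hβ : β' < β) (hba : b < a) (ha : a ≤ 1 + c) :
    0 < (bandValue c β b - bandValue c β a) + (bandValue c β' a - bandValue c β' b) := by
  have hmono := strictMonoOn_sub_mul_exp_neg c (hba.le.trans ha : b ≤ 1 + c) ha hba
  have hgain : (bandValue c β b - bandValue c β a) + (bandValue c β' a - bandValue c β' b)
      = (β - β') * ((a - c) * exp (-a) - (b - c) * exp (-b)) := by
    linear_combination bandValue_sub_bandValue c β β' b - bandValue_sub_bandValue c β β' a
  rw [hgain]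
  exact mul_pos (by linarith) (by linarith)

noncomputable def bandCap (c β : ℝ) : ℝ := max 0 (1 - c * β / (1 - β))

lemma bandCap_le_one {c β : ℝ} (hc : 0 ≤ c) (hβ0 : 0 ≤ β) (hβ1 : β < 1) : bandCap c β ≤ 1 :=
  max_le zero_le_one (sub_le_self _ (div_nonneg (mul_nonneg hc hβ0) (sub_nonneg.mpr hβ1.le)))

lemma bandCap_anti {c β β' : ℝ} (hc : 0 ≤ c) (hβ'β : β' ≤ β) (hβ1 : β < 1) :
    bandCap c β ≤ bandCap c β' := by
  refine max_le_max le_rfl (sub_le_sub_left ?_ 1)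
  rw [div_le_div_iff₀ (by linarith) (by linarith)]
  nlinarith [mul_le_mul_of_nonneg_left hβ'β hc]

theorem myopic_allocation_monotone_general (F : ℕ) (β : Fin F → ℝ) (c Λ : ℝ)
    (hc : 0 < c) (hβ : ∀ i, β i ∈ Set.Ico (0 : ℝ) 1)
    (rmax : Fin F → ℝ) (hrmax : ∀ i, rmax i = max 0 (1 - c * β i / (1 - β i)))
    (obj : (Fin F → ℝ) → ℝ)
    (hobj : ∀ r, obj r = ∑ i, ((1 - β i) * r i + c * β i) * Real.exp (-(r i)))
    (rstar : Fin F → ℝ)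
    (hfeas : (∀ i, 0 ≤ rstar i ∧ rstar i ≤ rmax i) ∧ ∑ i, rstar i = Λ)
    (hopt : ∀ r : Fin F → ℝ,
      ((∀ i, 0 ≤ r i ∧ r i ≤ rmax i) ∧ ∑ i, r i = Λ) → obj r ≤ obj rstar)
    (i j : Fin F) (hij : i ≠ j) (hβij : β i > β j) :
    rstar i ≤ rstar j := by
  by_contra! hlt
  obtain ⟨hbox, hsum⟩ := hfeas
  have hrmax' : ∀ k, rmax k = bandCap c (β k) := hrmax
  have hcap : rmax i ≤ rmax j := by
    rw [hrmax', hrmax']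
    exact bandCap_anti hc.le hβij.le (hβ i).2
  have hri : rstar i ≤ 1 + c := by
    have : rmax i ≤ 1 := hrmax' i ▸ bandCap_le_one hc.le (hβ i).1 (hβ i).2
    linarith [(hbox i).2]
  have hobj' : ∀ r, obj r = ∑ k, bandValue c (β k) (r k) := hobj
  have hswap := hopt (fun k => rstar (Equiv.swap i j k))
    ⟨swap_mem_box hbox hcap hlt.le, (Equiv.sum_comp _ rstar).trans hsum⟩
  have hgain : 0 < obj (fun k => rstar (Equiv.swap i j k)) - obj rstar := by
    rw [hobj', hobj', Fintype.sum_comp_swap_sub_sum (fun k => bandValue c (β k)) rstar hij]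
    exact bandValue_swap_gain_pos hβij hlt hri
  linarith

/-- Part 4 of Theorem 2: maximizing `F(r) = Σ_i [(1-β_i) r_i + c β_i] e^{-r_i}` over
`{r : 0 ≤ r_i ≤ r_max,i, Σ_i r_i = Λ}`, with `c > 0`, `β_i ∈ [0,1)` and
`r_max,i = max{0, 1 - c β_i/(1-β_i)}`: if `β_i > β_j` then any maximizer `rstar` satisfies
`rstar_i ≤ rstar_j`. -/
theorem myopic_allocation_monotone (F : ℕ) (β : Fin F → ℝ) (c Λ : ℝ)
    (hc : 0 < c) (hβ : ∀ i, β i ∈ Set.Ico (0 : ℝ) 1)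
    (rmax : Fin F → ℝ) (hrmax : ∀ i, rmax i = max 0 (1 - c * β i / (1 - β i)))
    (hΛ0 : 0 ≤ Λ) (hΛ : Λ ≤ ∑ i, rmax i)
    (obj : (Fin F → ℝ) → ℝ)
    (hobj : ∀ r, obj r = ∑ i, ((1 - β i) * r i + c * β i) * Real.exp (-(r i)))
    (rstar : Fin F → ℝ)
    (hfeas : (∀ i, 0 ≤ rstar i ∧ rstar i ≤ rmax i) ∧ ∑ i, rstar i = Λ)
    (hopt : ∀ r : Fin F → ℝ,
      ((∀ i, 0 ≤ r i ∧ r i ≤ rmax i) ∧ ∑ i, r i = Λ) → obj r ≤ obj rstar)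
    (i j : Fin F) (hij : i ≠ j) (hβij : β i > β j) :
    rstar i ≤ rstar j :=
  myopic_allocation_monotone_general F β c Λ hc hβ rmax hrmax obj hobj rstar hfeas hopt i j hij hβij
end
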